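/- arXiv:1602.03246 — 5 statements merged into one kernel-verified Lean document; each statement's English description precedes it below -/
import Mathlib

section
/- Let m be a natural number and let f(q) = ∑_{i=0}^m N_i (1−q)^i q^{m−i} be a real polynomial function where the real coefficients N_0, …, N_m are either all non-negative or all non-positive. Then for every q ∈ [0,1], q(1−q)|f'(q)| ≤ m|f(q)|. -/
/-! Each term `bᵢ(q) = (1 - q)^i q^(m - i)` satisfies the Euler-type identity
`q (1 - q) bᵢ'(q) = ((m - i)(1 - q) - i q) bᵢ(q)`, and on `[0, 1]` the factor
`(m - i)(1 - q) - i q` lies in `[-m, m]`. Since the terms `Nᵢ bᵢ(q)` all have the same sign there,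
the sum of their absolute values is `|f(q)|`, which gives the bound. -/

open Finset

theorem Finset.sum_abs_eq_abs_sum_of_sign {ι G : Type*} [AddCommGroup G] [LinearOrder G]
    [IsOrderedAddMonoid G] {s : Finset ι} {a : ι → G}
    (ha : (∀ i ∈ s, 0 ≤ a i) ∨ (∀ i ∈ s, a i ≤ 0)) :
    ∑ i ∈ s, |a i| = |∑ i ∈ s, a i| := by
  rcases ha with h | h
  · rw [abs_sum_of_nonneg h]
    exact sum_congr rfl fun i hi => abs_of_nonneg (h i hi)
  · rw [← abs_neg, ← sum_neg_distrib, abs_sum_of_nonneg fun i hi => neg_nonneg.2 (h i hi)]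
    exact sum_congr rfl fun i hi => abs_of_nonpos (h i hi)

theorem Finset.abs_sum_mul_le_of_sign {ι : Type*} {s : Finset ι} {a c : ι → ℝ} {M : ℝ}
    (ha : (∀ i ∈ s, 0 ≤ a i) ∨ (∀ i ∈ s, a i ≤ 0)) (hc : ∀ i ∈ s, |c i| ≤ M) :
    |∑ i ∈ s, a i * c i| ≤ M * |∑ i ∈ s, a i| :=
  calc |∑ i ∈ s, a i * c i| ≤ ∑ i ∈ s, |a i| * |c i| := by
        simpa only [abs_mul] using abs_sum_le_sum_abs (fun i => a i * c i) s
    _ ≤ ∑ i ∈ s, |a i| * M := sum_le_sum fun i hi => by gcongr; exact hc i hi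
    _ = M * |∑ i ∈ s, a i| := by rw [← sum_mul, sum_abs_eq_abs_sum_of_sign ha, mul_comm]

theorem natCast_mul_pow_sub_one_mul_self {R : Type*} [CommSemiring R] (n : ℕ) (x : R) :
    n * x ^ (n - 1) * x = n * x ^ n := by
  cases n with
  | zero => simp
  | succ n => rw [Nat.add_sub_cancel, mul_assoc, ← pow_succ]

theorem mul_one_sub_mul_deriv_one_sub_pow_mul_pow (i j : ℕ) (q : ℝ) :
    q * (1 - q) * deriv (fun x : ℝ => (1 - x) ^ i * x ^ j) q
      = (1 - q) ^ i * q ^ j * (j * (1 - q) - i * q) := by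
  have hd : HasDerivAt (fun x : ℝ => (1 - x) ^ i * x ^ j)
      (i * (1 - q) ^ (i - 1) * (-1) * q ^ j + (1 - q) ^ i * (j * q ^ (j - 1))) q :=
    (((hasDerivAt_id q).const_sub 1).pow i).mul (hasDerivAt_pow j q)
  rw [hd.deriv]
  linear_combination (1 - q) * (1 - q) ^ i * natCast_mul_pow_sub_one_mul_self j q
    - q * q ^ j * natCast_mul_pow_sub_one_mul_self i (1 - q)

theorem mul_one_sub_mul_deriv_sum_one_sub_pow_mul_pow {ι : Type*} (s : Finset ι) (N : ι → ℝ)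
    (a b : ι → ℕ) (q : ℝ) :
    q * (1 - q) * deriv (fun x : ℝ => ∑ i ∈ s, N i * (1 - x) ^ a i * x ^ b i) q
      = ∑ i ∈ s, N i * (1 - q) ^ a i * q ^ b i * (b i * (1 - q) - a i * q) := by
  simp_rw [mul_assoc (N _)]
  rw [deriv_fun_sum fun i _ => by fun_prop, mul_sum]
  refine sum_congr rfl fun i _ => ?_
  rw [deriv_const_mul _ (by fun_prop), mul_left_comm, mul_one_sub_mul_deriv_one_sub_pow_mul_pow]

theorem abs_natCast_mul_one_sub_sub_natCast_mul_le {q : ℝ} (hq : q ∈ Set.Icc (0 : ℝ) 1)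
    (a b : ℕ) : |(b * (1 - q) - a * q : ℝ)| ≤ (a + b : ℕ) := by
  obtain ⟨hq0, hq1⟩ := hq
  have ha : (0 : ℝ) ≤ a := a.cast_nonneg
  have hb : (0 : ℝ) ≤ b := b.cast_nonneg
  rw [abs_le]
  push_cast
  constructor <;> nlinarith

/-- If `f(q) = ∑_{i=0}^m N_i (1-q)^i q^(m-i)` where the real coefficients `N_0, …, N_m`
are either all non-negative or all non-positive, then for every `q ∈ [0,1]`,
`q(1-q)|f'(q)| ≤ m|f(q)|`. -/
theorem deriv_bound_of_sign_coeffs (m : ℕ) (N : ℕ → ℝ)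
    (hN : (∀ i ≤ m, 0 ≤ N i) ∨ (∀ i ≤ m, N i ≤ 0))
    (f : ℝ → ℝ)
    (hf : ∀ q : ℝ, f q = ∑ i ∈ Finset.range (m + 1), N i * (1 - q) ^ i * q ^ (m - i)) :
    ∀ q ∈ Set.Icc (0 : ℝ) 1, q * (1 - q) * |deriv f q| ≤ m * |f q| := by
  intro q hq
  have hterm_sign : (∀ i ∈ range (m + 1), 0 ≤ N i * (1 - q) ^ i * q ^ (m - i)) ∨
      (∀ i ∈ range (m + 1), N i * (1 - q) ^ i * q ^ (m - i) ≤ 0) := by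
    have hb : ∀ i, 0 ≤ (1 - q) ^ i * q ^ (m - i) := fun i =>
      mul_nonneg (pow_nonneg (sub_nonneg.2 hq.2) i) (pow_nonneg hq.1 _)
    refine hN.imp (fun h i hi => ?_) (fun h i hi => ?_) <;> rw [mul_assoc]
    · exact mul_nonneg (h i (Nat.lt_succ_iff.1 (mem_range.1 hi))) (hb i)
    · exact mul_nonpos_of_nonpos_of_nonneg (h i (Nat.lt_succ_iff.1 (mem_range.1 hi))) (hb i)
  have hcoeff : ∀ i ∈ range (m + 1), |((m - i : ℕ) * (1 - q) - i * q : ℝ)| ≤ m := fun i hi => by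
    simpa [Nat.add_sub_cancel' (Nat.lt_succ_iff.1 (mem_range.1 hi))] using
      abs_natCast_mul_one_sub_sub_natCast_mul_le hq i (m - i)
  rw [funext hf]
  dsimp only
  rw [← abs_of_nonneg (mul_nonneg hq.1 (sub_nonneg.2 hq.2)), ← abs_mul,
    mul_one_sub_mul_deriv_sum_one_sub_pow_mul_pow (range (m + 1)) N (fun i => i) (m - ·) q]
  exact abs_sum_mul_le_of_sign hterm_sign hcoeff
end

section
/- Let G be a finite simple graph with m edges and reliability polynomial R(G). Then for every q ∈ [0,1], q(1−q)|R(G)''(q)| ≤ m|R(G)'(q)|. -/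
/-- `relCoeff G i` is the number of `i`-element subsets `S` of the edge set of `G` such that
the spanning subgraph `(V, S)` is connected. -/
noncomputable def relCoeff {V : Type*} [Fintype V] (G : SimpleGraph V) (i : ℕ) : ℕ :=
  {S : Finset (Sym2 V) | ↑S ⊆ G.edgeSet ∧ S.card = i ∧
    (SimpleGraph.fromEdgeSet (↑S : Set (Sym2 V))).Connected}.ncard

/-- The number of edges of `G`. -/
noncomputable def numEdges {V : Type*} [Fintype V] (G : SimpleGraph V) : ℕ :=
  G.edgeSet.ncard

/-- The all-terminal reliability polynomial of `G`, as a real function of the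
edge failure probability `q`. -/
noncomputable def rel {V : Type*} [Fintype V] (G : SimpleGraph V) (q : ℝ) : ℝ :=
  ∑ i ∈ Finset.range (numEdges G + 1),
    (relCoeff G i : ℝ) * (1 - q) ^ i * q ^ (numEdges G - i)

/-- The reliability polynomial of the complete graph on `n` vertices. -/
noncomputable def relK (n : ℕ) : ℝ → ℝ := rel (⊤ : SimpleGraph (Fin n))

/-!
Write `R(q) = ∑ N_i (1-q)^i q^(m-i)`. Differentiating and reindexing gives
`R'(q) = -∑_{j<m} a_j (1-q)^j q^(m-1-j)` with `a_j = (j+1) N_{j+1} - (m-j) N_j`, and `a_j ≥ 0` by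
double counting pairs `(S, e)` with `S` a connected `j`-set and `e ∉ S`: adding `e` keeps `S`
connected, and each connected `(j+1)`-set arises at most `j+1` times.

For `P(q) = ∑ c_j (1-q)^j q^(n-j)` with all `c_j ≥ 0`, one has
`q(1-q) P'(q) = ∑ c_j ((n-j)(1-q) - j q) (1-q)^j q^(n-j)`, and the middle factor has absolute value
at most `n` on `[0,1]`; hence `q(1-q)|P'| ≤ n P`. Applied to `P = -R'`, of degree `m-1`, this gives
`q(1-q)|R''| ≤ (m-1)|R'| ≤ m|R'|`.
-/

open Finset

/-- `∑_{i ≤ n} c i (1 - q)^i q^(n - i)`: a polynomial of degree `n` written in the Bernstein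
basis, with the binomial factors absorbed into the coefficients `c`. -/
noncomputable def bernsteinSum (n : ℕ) (c : ℕ → ℝ) (q : ℝ) : ℝ :=
  ∑ i ∈ range (n + 1), c i * ((1 - q) ^ i * q ^ (n - i))

noncomputable def negDerivCoeff (n : ℕ) (c : ℕ → ℝ) (j : ℕ) : ℝ :=
  (j + 1) * c (j + 1) - (n + 1 - j : ℕ) * c j

lemma bernsteinSum_zero (c : ℕ → ℝ) : bernsteinSum 0 c = fun _ => c 0 := by
  funext q
  simp [bernsteinSum]

lemma bernsteinSum_nonneg {n : ℕ} {c : ℕ → ℝ} (hc : ∀ i ≤ n, 0 ≤ c i) {q : ℝ}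
    (hq : q ∈ Set.Icc (0 : ℝ) 1) : 0 ≤ bernsteinSum n c q :=
  sum_nonneg fun i hi => mul_nonneg (hc i (Nat.lt_succ_iff.1 (mem_range.1 hi)))
    (mul_nonneg (pow_nonneg (sub_nonneg.2 hq.2) _) (pow_nonneg hq.1 _))

lemma natCast_mul_pow_pred_mul (j : ℕ) (x : ℝ) : j * x ^ (j - 1) * x = j * x ^ j := by
  cases j with
  | zero => simp
  | succ j => simp [pow_succ, mul_assoc]

lemma mul_deriv_bernsteinTerm (j k : ℕ) (q : ℝ) :
    q * (1 - q) * deriv (fun q : ℝ => (1 - q) ^ j * q ^ k) q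
      = (k * (1 - q) - j * q) * ((1 - q) ^ j * q ^ k) := by
  rw [((((hasDerivAt_id' q).const_sub 1).fun_pow j).fun_mul (hasDerivAt_pow k q)).deriv]
  linear_combination (-(q * q ^ k)) * natCast_mul_pow_pred_mul j (1 - q)
    + ((1 - q) * (1 - q) ^ j) * natCast_mul_pow_pred_mul k q

lemma hasDerivAt_bernsteinTerm_succ (n i : ℕ) (q : ℝ) :
    HasDerivAt (fun q : ℝ => (1 - q) ^ i * q ^ (n + 1 - i))
      ((n + 1 - i : ℕ) * ((1 - q) ^ i * q ^ (n - i))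
        - i * ((1 - q) ^ (i - 1) * q ^ (n - (i - 1)))) q := by
  refine ((((hasDerivAt_id' q).const_sub 1).fun_pow i).fun_mul
    (hasDerivAt_pow (n + 1 - i) q)).congr_deriv ?_
  rw [show n + 1 - i - 1 = n - i by omega]
  cases i with
  | zero => simp
  | succ i =>
    rw [show n + 1 - (i + 1) = n - (i + 1 - 1) by omega]
    simp only [Nat.cast_add, Nat.cast_one, add_tsub_cancel_right, mul_neg, mul_one, neg_mul]
    ring

lemma hasDerivAt_bernsteinSum_succ (n : ℕ) (c : ℕ → ℝ) (q : ℝ) :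
    HasDerivAt (bernsteinSum (n + 1) c) (-bernsteinSum n (negDerivCoeff n c) q) q := by
  refine (HasDerivAt.fun_sum (u := range (n + 2))
    fun i _ => (hasDerivAt_bernsteinTerm_succ n i q).const_mul (c i)).congr_deriv ?_
  simp only [mul_sub, sum_sub_distrib]
  rw [sum_range_succ, sum_range_succ' (fun i => c i * (i * _))]
  simp only [Nat.sub_self, Nat.cast_zero, zero_mul, mul_zero, add_zero, Nat.add_sub_cancel,
    bernsteinSum, negDerivCoeff, ← sum_sub_distrib, ← sum_neg_distrib]
  refine sum_congr rfl fun j _ => ?_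
  push_cast
  ring

lemma abs_natCast_mul_sub_le {n j k : ℕ} (hj : j ≤ n) (hk : k ≤ n) {q : ℝ}
    (hq : q ∈ Set.Icc (0 : ℝ) 1) : |k * (1 - q) - j * q| ≤ n := by
  obtain ⟨hq0, hq1⟩ := hq
  have hj' : (j : ℝ) ≤ n := by exact_mod_cast hj
  have hk' : (k : ℝ) ≤ n := by exact_mod_cast hk
  rw [abs_le]
  constructor <;> nlinarith [(j.cast_nonneg : (0 : ℝ) ≤ j), (k.cast_nonneg : (0 : ℝ) ≤ k)]

lemma mul_abs_deriv_bernsteinSum_le {n : ℕ} {c : ℕ → ℝ} (hc : ∀ i ≤ n, 0 ≤ c i) {q : ℝ}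
    (hq : q ∈ Set.Icc (0 : ℝ) 1) :
    q * (1 - q) * |deriv (bernsteinSum n c) q| ≤ n * bernsteinSum n c q := by
  have hdiff (i : ℕ) : DifferentiableAt ℝ (fun q : ℝ => (1 - q) ^ i * q ^ (n - i)) q := by
    fun_prop
  have hderiv : q * (1 - q) * deriv (bernsteinSum n c) q = ∑ i ∈ range (n + 1),
      c i * (((n - i : ℕ) * (1 - q) - i * q) * ((1 - q) ^ i * q ^ (n - i))) := by
    rw [show bernsteinSum n c = fun q => ∑ i ∈ range (n + 1), c i * ((1 - q) ^ i * q ^ (n - i))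
      from rfl, deriv_fun_sum fun i _ => (hdiff i).const_mul (c i), mul_sum]
    refine sum_congr rfl fun i _ => ?_
    rw [deriv_const_mul _ (hdiff i), mul_left_comm, mul_deriv_bernsteinTerm]
  have hqq : 0 ≤ q * (1 - q) := mul_nonneg hq.1 (sub_nonneg.2 hq.2)
  calc q * (1 - q) * |deriv (bernsteinSum n c) q|
      = |∑ i ∈ range (n + 1),
          c i * (((n - i : ℕ) * (1 - q) - i * q) * ((1 - q) ^ i * q ^ (n - i)))| := by
        rw [← hderiv, abs_mul, abs_of_nonneg hqq]
    _ ≤ ∑ i ∈ range (n + 1),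
          |c i * (((n - i : ℕ) * (1 - q) - i * q) * ((1 - q) ^ i * q ^ (n - i)))| :=
        abs_sum_le_sum_abs _ _
    _ ≤ ∑ i ∈ range (n + 1), c i * (n * ((1 - q) ^ i * q ^ (n - i))) := by
        refine sum_le_sum fun i hi => ?_
        have hin : i ≤ n := Nat.lt_succ_iff.1 (mem_range.1 hi)
        have hb : 0 ≤ (1 - q) ^ i * q ^ (n - i) :=
          mul_nonneg (pow_nonneg (sub_nonneg.2 hq.2) _) (pow_nonneg hq.1 _)
        rw [abs_mul, abs_mul, abs_of_nonneg (hc i hin), abs_of_nonneg hb]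
        gcongr
        · exact hc i hin
        · exact abs_natCast_mul_sub_le hin (Nat.sub_le n i) hq
    _ = n * bernsteinSum n c q := by
        rw [bernsteinSum, mul_sum]
        exact sum_congr rfl fun i _ => by ring

theorem mul_abs_deriv_deriv_bernsteinSum_le {n : ℕ} {c : ℕ → ℝ}
    (hc : ∀ j < n, c j * (n - j : ℕ) ≤ c (j + 1) * (j + 1)) {q : ℝ}
    (hq : q ∈ Set.Icc (0 : ℝ) 1) :
    q * (1 - q) * |deriv (deriv (bernsteinSum n c)) q| ≤ n * |deriv (bernsteinSum n c) q| := by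
  cases n with
  | zero => simp [bernsteinSum_zero]
  | succ n =>
    have hnonneg : ∀ j ≤ n, 0 ≤ negDerivCoeff n c j := fun j hj => by
      have := hc j (Nat.lt_succ_of_le hj)
      rw [negDerivCoeff]
      linarith
    have hderiv :
        deriv (bernsteinSum (n + 1) c) = fun q => -bernsteinSum n (negDerivCoeff n c) q :=
      funext fun q => (hasDerivAt_bernsteinSum_succ n c q).deriv
    rw [hderiv, deriv.fun_neg, abs_neg, abs_neg, abs_of_nonneg (bernsteinSum_nonneg hnonneg hq)]
    calc q * (1 - q) * |deriv (bernsteinSum n (negDerivCoeff n c)) q|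
        ≤ n * bernsteinSum n (negDerivCoeff n c) q := mul_abs_deriv_bernsteinSum_le hnonneg hq
      _ ≤ (n + 1 : ℕ) * bernsteinSum n (negDerivCoeff n c) q := by
        gcongr
        · exact bernsteinSum_nonneg hnonneg hq
        · omega

theorem card_slice_mul_le_card_slice_succ_mul {α : Type*} [DecidableEq α] {E : Finset α}
    {𝒜 : Finset (Finset α)} (h𝒜 : 𝒜 ⊆ E.powerset) (hins : ∀ s ∈ 𝒜, ∀ e ∈ E, insert e s ∈ 𝒜)
    (j : ℕ) : #(𝒜 # j) * (#E - j) ≤ #(𝒜 # (j + 1)) * (j + 1) := by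
  refine card_mul_le_card_mul (· ⊆ ·) (fun s hs => ?_) (fun t ht => ?_)
  · obtain ⟨hs𝒜, hs⟩ := mem_slice.1 hs
    have hsE : s ⊆ E := mem_powerset.1 (h𝒜 hs𝒜)
    calc #E - j = #((E \ s).image (insert · s)) := by
          rw [card_image_of_injOn fun e he e' _ h => (insert_inj (mem_sdiff.1 he).2).1 h,
            card_sdiff_of_subset hsE, hs]
      _ ≤ _ := card_le_card fun t ht => by
          obtain ⟨e, he, rfl⟩ := mem_image.1 ht
          obtain ⟨heE, hes⟩ := mem_sdiff.1 he
          refine (mem_bipartiteAbove _).2 ⟨mem_slice.2 ⟨hins s hs𝒜 e heE, ?_⟩, subset_insert e s⟩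
          rw [card_insert_of_notMem hes, hs]
  · calc #(bipartiteBelow (· ⊆ ·) (𝒜 # j) t) ≤ #(t.powersetCard j) :=
          card_le_card fun s hs => by
            obtain ⟨hs, hst⟩ := (mem_bipartiteBelow _).1 hs
            exact mem_powersetCard.2 ⟨hst, (mem_slice.1 hs).2⟩
      _ = j + 1 := by rw [card_powersetCard, (mem_slice.1 ht).2, Nat.choose_succ_self_right]

theorem relCoeff_mul_le {V : Type*} [Fintype V] (G : SimpleGraph V) (j : ℕ) :
    relCoeff G j * (numEdges G - j) ≤ relCoeff G (j + 1) * (j + 1) := by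
  classical
  set 𝒜 : Finset (Finset (Sym2 V)) :=
    {S ∈ G.edgeFinset.powerset | (SimpleGraph.fromEdgeSet (S : Set (Sym2 V))).Connected}
  have hslice (i : ℕ) : relCoeff G i = #(𝒜 # i) := by
    rw [relCoeff, ← Set.ncard_coe_finset]
    congr 1
    ext S
    simp [𝒜, mem_slice, ← SimpleGraph.coe_edgeFinset, and_comm, and_left_comm]
  have hm : numEdges G = #G.edgeFinset := by
    rw [numEdges, ← SimpleGraph.coe_edgeFinset, Set.ncard_coe_finset]
  rw [hslice, hslice, hm]
  refine card_slice_mul_le_card_slice_succ_mul (filter_subset _ _) (fun S hS e he => ?_) j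
  obtain ⟨hSE, hS⟩ := mem_filter.1 hS
  refine mem_filter.2 ⟨mem_powerset.2 (insert_subset he (mem_powerset.1 hSE)), ?_⟩
  exact hS.mono (SimpleGraph.fromEdgeSet_mono (coe_subset.2 (subset_insert e S)))

/-- For a finite simple graph `G` with `m` edges, for every `q ∈ [0,1]`,
`q(1-q)|R(G)''(q)| ≤ m|R(G)'(q)|`. -/
theorem rel_second_deriv_bound {V : Type*} [Fintype V] (G : SimpleGraph V) :
    ∀ q ∈ Set.Icc (0 : ℝ) 1,
      q * (1 - q) * |deriv (deriv (rel G)) q| ≤ (numEdges G : ℝ) * |deriv (rel G) q| := by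
  have hrel : rel G = bernsteinSum (numEdges G) fun i => relCoeff G i := by
    funext q
    simp only [rel, bernsteinSum, mul_assoc]
  rw [hrel]
  exact fun q hq => mul_abs_deriv_deriv_bernsteinSum_le
    (fun j _ => by exact_mod_cast relCoeff_mul_le G j) hq
end

section
/- Let r_n(q) = R(K_n)(q) denote the reliability polynomial of the complete graph K_n on n vertices (so r_1 ≡ 1). Then for every n ≥ 1 and every real q, r_n(q) = 1 − ∑_{k=1}^{n−1} C(n−1, k−1) q^{k(n−k)} r_k(q), where C(n−1,k−1) is a binomial coefficient. -/
/-!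
Let every edge of `K_n` fail independently with probability `q`, and classify the sets `S` of
surviving edges by the vertex set `A` of the component of a fixed vertex `v` in `(V, S)`; the
probabilities of all `S` add up to `1`. The sets `S` with component `A` are exactly the unions of
a connected spanning edge set of `K_A` and an arbitrary edge set inside `Aᶜ`, all `|A| (n - |A|)`
edges between `A` and `Aᶜ` having failed. So they have total probability `q^{k(n-k)} r_k(q)`
for `|A| = k`. There are `C(n-1, k-1)` such sets `A`, and the one with `k = n` contributes `r_n(q)`.
-/

open Finset SimpleGraph

theorem Nat.add_choose_two (a b : ℕ) : (a + b).choose 2 = a.choose 2 + b.choose 2 + a * b := by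
  simp [Nat.add_choose_eq, Finset.Nat.antidiagonal_succ]
  ring

namespace Finset

theorem sum_powerset_map {α β M : Type*} [AddCommMonoid M] (f : α ↪ β) (X : Finset α)
    (g : Finset β → M) : ∑ T ∈ (X.map f).powerset, g T = ∑ T ∈ X.powerset, g (T.map f) := by
  have : (X.map f).powerset = X.powerset.map (mapEmbedding f).toEmbedding := by
    ext T
    simp [subset_map_iff, eq_comm]
  rw [this, sum_map]
  rfl

theorem sum_powerset_union {α M : Type*} [DecidableEq α] [AddCommMonoid M] {X Y : Finset α}
    (h : Disjoint X Y) (f : Finset α → Finset α → M) :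
    ∑ S ∈ (X ∪ Y).powerset, f (S ∩ X) (S ∩ Y) = ∑ T ∈ X.powerset, ∑ U ∈ Y.powerset, f T U := by
  rw [← sum_product']
  refine sum_nbij' (fun S => (S ∩ X, S ∩ Y)) (fun p => p.1 ∪ p.2) ?_ ?_ ?_ ?_ (fun _ _ => rfl)
  · intro S _
    simp
  · intro p hp
    simp only [mem_product, mem_powerset] at hp ⊢
    exact union_subset_union hp.1 hp.2
  · intro S hS
    simp only [mem_powerset] at hS
    simp only [← inter_union_distrib_left, inter_eq_left.2 hS]
  · intro p hp
    simp only [mem_product, mem_powerset] at hp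
    ext1 <;> simp only [union_inter_distrib_right]
    · rw [inter_eq_left.2 hp.1, disjoint_iff_inter_eq_empty.1 (h.symm.mono_left hp.2), union_empty]
    · rw [inter_eq_left.2 hp.2, disjoint_iff_inter_eq_empty.1 (h.mono_left hp.1), empty_union]

theorem sum_filter_mem_apply_card {V M : Type*} [Fintype V] [DecidableEq V]
    [AddCommMonoid M] (v : V) (f : ℕ → M) :
    ∑ A : Finset V with v ∈ A, f #A =
      ∑ m ∈ range (Fintype.card V), (Fintype.card V - 1).choose m • f (m + 1) := by
  have hv : ∀ B ∈ (univ.erase v).powerset, v ∉ B := fun B hB h =>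
    (mem_erase.1 (mem_powerset.1 hB h)).1 rfl
  have himage : ({A | v ∈ A} : Finset (Finset V)) = (univ.erase v).powerset.image (insert v) := by
    ext A
    simp only [mem_filter, mem_univ, true_and, mem_image, mem_powerset]
    constructor
    · intro hA
      exact ⟨A.erase v, erase_subset_erase v (subset_univ A), insert_erase hA⟩
    · rintro ⟨B, -, rfl⟩
      exact mem_insert_self v B
  have hinj : Set.InjOn (insert v) ((univ.erase v).powerset : Set (Finset V)) :=
    fun B hB B' hB' h => by rw [← erase_insert (hv B hB), h, erase_insert (hv B' hB')]
  rw [himage, sum_image hinj, sum_congr rfl fun B hB => by rw [card_insert_of_notMem (hv B hB)],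
    sum_powerset_apply_card (fun k => f (k + 1)), card_erase_of_mem (mem_univ v), card_univ,
    Nat.sub_add_cancel (Fintype.card_pos_iff.2 ⟨v⟩)]

theorem disjoint_sym2_compl {V : Type*} [Fintype V] [DecidableEq V] (A : Finset V) :
    Disjoint A.sym2 Aᶜ.sym2 := by
  refine Finset.disjoint_left.2 fun e he he' => ?_
  induction e using Sym2.ind with
  | _ x y => simp_all

end Finset

section SubsetWeight

variable {α : Type*}

/-- The probability that the surviving elements of `E` are exactly those of `S ⊆ E`, when each
element fails independently with probability `q`. -/
def subsetWeight (q : ℝ) (E S : Finset α) : ℝ := (1 - q) ^ #S * q ^ (#E - #S)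

theorem sum_subsetWeight_powerset (q : ℝ) (E : Finset α) :
    ∑ S ∈ E.powerset, subsetWeight q E S = 1 := by
  simp [subsetWeight, sum_pow_mul_eq_add_pow]

theorem subsetWeight_map {β : Type*} (q : ℝ) (f : α ↪ β) (E S : Finset α) :
    subsetWeight q (E.map f) (S.map f) = subsetWeight q E S := by
  simp only [subsetWeight, card_map]

theorem subsetWeight_union [DecidableEq α] {q : ℝ} {E X Y T U : Finset α} (hXY : Disjoint X Y)
    (hXYE : X ∪ Y ⊆ E) (hT : T ⊆ X) (hU : U ⊆ Y) :
    subsetWeight q E (T ∪ U) =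
      subsetWeight q X T * subsetWeight q Y U * q ^ (#E - #X - #Y) := by
  have hE := card_le_card hXYE
  rw [card_union_of_disjoint hXY] at hE
  have hT' := card_le_card hT
  have hU' := card_le_card hU
  rw [subsetWeight, subsetWeight, subsetWeight, card_union_of_disjoint (hXY.mono hT hU),
    show #E - (#T + #U) = (#X - #T) + (#Y - #U) + (#E - #X - #Y) by omega]
  ring

end SubsetWeight

namespace SimpleGraph

theorem fromEdgeSet_image_sym2Map {V W : Type*} (f : V ↪ W) (s : Set (Sym2 V)) :
    fromEdgeSet (f.sym2Map '' s) = (fromEdgeSet s).map f := by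
  ext x y
  simp only [fromEdgeSet_adj, map_adj, Set.mem_image, Sym2.exists,
    Function.Embedding.sym2Map_apply, Sym2.map_mk]
  constructor
  · rintro ⟨⟨a, b, hab, he⟩, hxy⟩
    rcases Sym2.eq_iff.mp he with ⟨rfl, rfl⟩ | ⟨rfl, rfl⟩
    · exact ⟨a, b, ⟨hab, fun h => hxy (h ▸ rfl)⟩, rfl, rfl⟩
    · exact ⟨b, a, ⟨Sym2.eq_swap ▸ hab, fun h => hxy (h ▸ rfl)⟩, rfl, rfl⟩
  · rintro ⟨a, b, ⟨hab, hne⟩, rfl, rfl⟩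
    exact ⟨⟨a, b, hab, rfl⟩, f.injective.ne hne⟩

theorem forall_reachable_iff_mem {V : Type*} {G : SimpleGraph V} {s : Set V} {v : V}
    (hv : v ∈ s) :
    (∀ x, G.Reachable v x ↔ x ∈ s) ↔
      (∀ x y, G.Adj x y → x ∈ s → y ∈ s) ∧ (G.induce s).Connected := by
  constructor
  · intro h
    refine ⟨fun x y hxy hx => (h y).1 (((h x).2 hx).trans hxy.reachable), ?_⟩
    have hs : (G.connectedComponentMk v).supp = s := by
      ext x
      rw [ConnectedComponent.mem_supp_iff, ConnectedComponent.eq, ← h x]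
      exact ⟨Reachable.symm, Reachable.symm⟩
    exact hs ▸ (ConnectedComponent.maximal_connected_induce_supp _).1
  · rintro ⟨hclosed, hconn⟩ x
    refine ⟨fun ⟨p⟩ => ?_, fun hx => ?_⟩
    · by_contra hx
      obtain ⟨d, -, hd, hd'⟩ := p.exists_boundary_dart s hv hx
      exact hd' (hclosed _ _ d.adj hd)
    · exact (hconn.preconnected ⟨v, hv⟩ ⟨x, hx⟩).map (Embedding.induce s).toHom

theorem induce_fromEdgeSet_inter_sym2 {V : Type*} [DecidableEq V] (S : Finset (Sym2 V))
    (A : Finset V) :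
    (fromEdgeSet ((S ∩ A.sym2 : Finset (Sym2 V)) : Set (Sym2 V))).induce A =
      (fromEdgeSet (S : Set (Sym2 V))).induce A := by
  ext ⟨x, hx⟩ ⟨y, hy⟩
  simp_all

theorem card_edgeFinset_induce_top {V : Type*} [DecidableEq V] (A : Finset V) :
    #((⊤ : SimpleGraph V).induce A).edgeFinset = (#A).choose 2 := by
  convert card_edgeFinset_top_eq_card_choose_two (V := (A : Set V)) using 2
  · ext e
    induction e using Sym2.ind
    simp only [mem_edgeFinset, mem_edgeSet, induce_adj, top_adj]
    exact Subtype.coe_injective.ne_iff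
  · simp

variable {V : Type*} [Fintype V] [DecidableEq V] {G : SimpleGraph V} [DecidableRel G.Adj]

theorem map_edgeFinset_induce_finset (A : Finset V) :
    (G.induce A).edgeFinset.map (Function.Embedding.subtype (· ∈ (A : Set V))).sym2Map =
      G.edgeFinset ∩ A.sym2 := by
  convert map_edgeFinset_induce (G := G) (s := (A : Set V))
  simp

theorem card_edgeFinset_inter_sym2 (A : Finset V) :
    #(G.edgeFinset ∩ A.sym2) = #(G.induce A).edgeFinset := by
  rw [← map_edgeFinset_induce_finset, card_map]

theorem forall_fromEdgeSet_adj_mem_iff {S : Finset (Sym2 V)} (hS : S ⊆ G.edgeFinset)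
    (A : Finset V) :
    (∀ x y, (fromEdgeSet (S : Set (Sym2 V))).Adj x y → x ∈ A → y ∈ A) ↔
      S ⊆ G.edgeFinset ∩ A.sym2 ∪ G.edgeFinset ∩ Aᶜ.sym2 := by
  constructor
  · intro h e he
    induction e using Sym2.ind with
    | _ x y =>
      have hGxy : G.Adj x y := by simpa using hS he
      have hxy : (fromEdgeSet (S : Set (Sym2 V))).Adj x y := ⟨he, hGxy.ne⟩
      by_cases hx : x ∈ A
      · simp [hGxy, hx, h x y hxy hx]
      · have hy : y ∉ A := fun hy => hx (h y x hxy.symm hy)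
        simp [hGxy, hx, hy]
  · intro h x y hxy hx
    have := h hxy.1
    simp_all

theorem forall_reachable_fromEdgeSet_iff {S : Finset (Sym2 V)} (hS : S ⊆ G.edgeFinset)
    {A : Finset V} {v : V} (hv : v ∈ A) :
    (∀ x, (fromEdgeSet (S : Set (Sym2 V))).Reachable v x ↔ x ∈ A) ↔
      S ⊆ G.edgeFinset ∩ A.sym2 ∪ G.edgeFinset ∩ Aᶜ.sym2 ∧
        ((fromEdgeSet ((S ∩ (G.edgeFinset ∩ A.sym2) : Finset (Sym2 V)) : Set (Sym2 V))).induce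
          A).Connected := by
  rw [← inter_assoc, inter_eq_left.2 hS, induce_fromEdgeSet_inter_sym2,
    ← forall_fromEdgeSet_adj_mem_iff hS]
  exact forall_reachable_iff_mem (s := (A : Set V)) hv

end SimpleGraph

open Classical in
theorem rel_eq_sum {V : Type*} [Fintype V] [DecidableEq V] (G : SimpleGraph V)
    [DecidableRel G.Adj] (q : ℝ) :
    rel G q = ∑ S ∈ G.edgeFinset.powerset with
        (fromEdgeSet ((S : Finset (Sym2 V)) : Set (Sym2 V))).Connected,
      subsetWeight q G.edgeFinset S := by
  set F := {S ∈ G.edgeFinset.powerset |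
    (fromEdgeSet ((S : Finset (Sym2 V)) : Set (Sym2 V))).Connected}
  have hm : numEdges G = #G.edgeFinset := by
    rw [numEdges, ← coe_edgeFinset, Set.ncard_coe_finset]
  have hcoeff (i : ℕ) : relCoeff G i = #{S ∈ F | #S = i} := by
    rw [relCoeff, ← Set.ncard_coe_finset]
    congr 1
    ext S
    simp only [F, ← coe_edgeFinset, coe_filter, mem_filter, mem_powerset,
      SetLike.coe_subset_coe, Set.mem_ofPred_eq]
    tauto
  have hcard : ∀ S ∈ F, #S ∈ range (numEdges G + 1) := fun S hS =>
    mem_range_succ_iff.2 (hm ▸ card_le_card (mem_powerset.1 (mem_filter.1 hS).1))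
  rw [← sum_fiberwise_of_maps_to hcard, rel]
  refine sum_congr rfl fun i _ => ?_
  rw [sum_congr rfl fun S hS => by rw [subsetWeight, (mem_filter.1 hS).2], sum_const, hcoeff,
    nsmul_eq_mul, hm, mul_assoc]

open Classical in
theorem rel_eq_sum_map {V W : Type*} [Fintype V] [DecidableEq V] [DecidableEq W]
    (G : SimpleGraph V) [DecidableRel G.Adj] (f : V ↪ W) (q : ℝ) :
    rel G q = ∑ S ∈ (G.edgeFinset.map f.sym2Map).powerset with
        ((fromEdgeSet ((S : Finset (Sym2 W)) : Set (Sym2 W))).comap f).Connected,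
      subsetWeight q (G.edgeFinset.map f.sym2Map) S := by
  rw [rel_eq_sum, sum_filter, sum_filter, sum_powerset_map]
  refine sum_congr rfl fun T _ => ?_
  simp only [subsetWeight_map, coe_map, fromEdgeSet_image_sym2Map, comap_map_eq]

theorem SimpleGraph.Iso.rel_eq {V W : Type*} [Fintype V] [Fintype W] {G : SimpleGraph V}
    {G' : SimpleGraph W} (e : G ≃g G') (q : ℝ) : rel G q = rel G' q := by
  classical
  have hE : G.edgeFinset.map e.toEquiv.toEmbedding.sym2Map = G'.edgeFinset := by
    ext d
    induction d using Sym2.ind with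
    | _ x y =>
      simp only [mem_map, mem_edgeFinset, mem_edgeSet, Sym2.exists,
        Function.Embedding.sym2Map_apply, Sym2.map_mk]
      constructor
      · rintro ⟨a, b, hab, heq⟩
        rw [← mem_edgeSet, ← heq]
        exact e.map_adj_iff.2 hab
      · intro hxy
        exact ⟨e.symm x, e.symm y, e.symm.map_adj_iff.2 hxy, by simp⟩
  rw [rel_eq_sum_map G e.toEquiv.toEmbedding, hE, rel_eq_sum]
  refine sum_congr (filter_congr fun S _ => ?_) fun _ _ => rfl
  exact (Iso.comap e.toEquiv (fromEdgeSet ↑S)).connected_iff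

theorem rel_top_eq_relK (W : Type*) [Fintype W] (q : ℝ) :
    rel (⊤ : SimpleGraph W) q = relK (Fintype.card W) q :=
  (Iso.completeGraph (Fintype.equivFin W)).rel_eq q

section Component

variable {V : Type*} [Fintype V] [DecidableEq V] (G : SimpleGraph V) [DecidableRel G.Adj]

open Classical in
theorem rel_induce_eq_sum (A : Finset V) (q : ℝ) :
    rel (G.induce A) q = ∑ T ∈ (G.edgeFinset ∩ A.sym2).powerset with
        ((fromEdgeSet ((T : Finset (Sym2 V)) : Set (Sym2 V))).induce A).Connected,
      subsetWeight q (G.edgeFinset ∩ A.sym2) T := by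
  rw [rel_eq_sum_map (G.induce A) (Function.Embedding.subtype _), map_edgeFinset_induce_finset]

open Classical in
theorem sum_subsetWeight_forall_reachable_iff {v : V} {A : Finset V} (hv : v ∈ A) (q : ℝ) :
    ∑ S ∈ G.edgeFinset.powerset with
        ∀ x, (fromEdgeSet ((S : Finset (Sym2 V)) : Set (Sym2 V))).Reachable v x ↔ x ∈ A,
      subsetWeight q G.edgeFinset S =
    q ^ (#G.edgeFinset - #(G.induce A).edgeFinset -
        #(G.induce ((Aᶜ : Finset V) : Set V)).edgeFinset) * rel (G.induce A) q := by
  set X := G.edgeFinset ∩ A.sym2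
  set Y := G.edgeFinset ∩ Aᶜ.sym2
  set P : Finset (Sym2 V) → Prop :=
    fun T => ((fromEdgeSet (T : Set (Sym2 V))).induce A).Connected
  have hXY : Disjoint X Y :=
    (disjoint_sym2_compl A).mono inter_subset_right inter_subset_right
  have hXYE : X ∪ Y ⊆ G.edgeFinset := union_subset inter_subset_left inter_subset_left
  have hfilter : {S ∈ G.edgeFinset.powerset |
        ∀ x, (fromEdgeSet ((S : Finset (Sym2 V)) : Set (Sym2 V))).Reachable v x ↔ x ∈ A} =
      {S ∈ (X ∪ Y).powerset | P (S ∩ X)} := by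
    ext S
    simp only [mem_filter, mem_powerset]
    constructor
    · rintro ⟨hS, h⟩
      exact (forall_reachable_fromEdgeSet_iff hS hv).1 h
    · rintro ⟨hS, h⟩
      exact ⟨hS.trans hXYE, (forall_reachable_fromEdgeSet_iff (hS.trans hXYE) hv).2 ⟨hS, h⟩⟩
  rw [hfilter, ← card_edgeFinset_inter_sym2, ← card_edgeFinset_inter_sym2, rel_induce_eq_sum,
    sum_filter, sum_filter, mul_sum]
  calc ∑ S ∈ (X ∪ Y).powerset, (if P (S ∩ X) then subsetWeight q G.edgeFinset S else 0)
      = ∑ T ∈ X.powerset, ∑ U ∈ Y.powerset,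
          if P T then subsetWeight q G.edgeFinset (T ∪ U) else 0 := by
        rw [← sum_powerset_union hXY]
        refine sum_congr rfl fun S hS => ?_
        rw [← inter_union_distrib_left, inter_eq_left.2 (mem_powerset.1 hS)]
    _ = ∑ T ∈ X.powerset, q ^ (#G.edgeFinset - #X - #Y) *
          if P T then subsetWeight q X T else 0 := by
        refine sum_congr rfl fun T hT => ?_
        split_ifs
        · rw [sum_congr rfl fun U hU =>
            subsetWeight_union hXY hXYE (mem_powerset.1 hT) (mem_powerset.1 hU),
            ← sum_mul, ← mul_sum, sum_subsetWeight_powerset, mul_one, mul_comm]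
        · simp

open Classical in
theorem sum_pow_mul_rel_induce (v : V) (q : ℝ) :
    ∑ A : Finset V with v ∈ A,
      q ^ (#G.edgeFinset - #(G.induce A).edgeFinset -
          #(G.induce ((Aᶜ : Finset V) : Set V)).edgeFinset) * rel (G.induce A) q = 1 := by
  let component (S : Finset (Sym2 V)) : Finset V :=
    {x | (fromEdgeSet (S : Set (Sym2 V))).Reachable v x}
  have hmaps : ∀ S ∈ G.edgeFinset.powerset, component S ∈ ({A | v ∈ A} : Finset (Finset V)) :=
    fun S _ => by simp [component]
  rw [← sum_subsetWeight_powerset q G.edgeFinset, ← sum_fiberwise_of_maps_to hmaps]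
  refine sum_congr rfl fun A hA => ?_
  rw [← sum_subsetWeight_forall_reachable_iff G (mem_filter.1 hA).2]
  refine sum_congr (filter_congr fun S _ => ?_) fun _ _ => rfl
  simp [component, Finset.ext_iff]

end Component

theorem sum_pow_mul_relK {V : Type*} [Fintype V] [DecidableEq V] (v : V) (q : ℝ) :
    ∑ A : Finset V with v ∈ A, q ^ (#A * (Fintype.card V - #A)) * relK #A q = 1 := by
  rw [← sum_pow_mul_rel_induce (⊤ : SimpleGraph V) v q]
  refine sum_congr rfl fun A _ => ?_
  have hexp : (Fintype.card V).choose 2 - (#A).choose 2 - (Fintype.card V - #A).choose 2 =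
      #A * (Fintype.card V - #A) := by
    have h := Nat.add_choose_two (#A) (Fintype.card V - #A)
    rw [Nat.add_sub_of_le (card_le_univ A)] at h
    omega
  rw [card_edgeFinset_induce_top, card_edgeFinset_induce_top,
    card_edgeFinset_top_eq_card_choose_two, card_compl, hexp]
  simp [rel_top_eq_relK]

/-- The recurrence for the reliability polynomial of complete graphs:
`r_n(q) = 1 - ∑_{k=1}^{n-1} C(n-1, k-1) q^(k(n-k)) r_k(q)`. -/
theorem relK_recurrence (n : ℕ) (hn : 1 ≤ n) (q : ℝ) :
    relK n q =
      1 - ∑ k ∈ Finset.Icc 1 (n - 1),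
        ((n - 1).choose (k - 1) : ℝ) * q ^ (k * (n - k)) * relK k q := by
  obtain ⟨m, rfl⟩ := Nat.exists_eq_add_of_le' hn
  have h := sum_pow_mul_relK (0 : Fin (m + 1)) q
  rw [Fintype.card_fin,
    sum_filter_mem_apply_card (0 : Fin (m + 1)) (fun k => q ^ (k * (m + 1 - k)) * relK k q),
    Fintype.card_fin, sum_range_succ] at h
  simp only [Nat.add_sub_cancel, Nat.choose_self, Nat.sub_self, mul_zero, pow_zero, one_mul,
    one_smul, nsmul_eq_mul] at h
  rw [Nat.add_sub_cancel, ← Ico_add_one_right_eq_Icc, sum_Ico_eq_sum_range, Nat.add_sub_cancel,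
    ← h]
  simp [add_comm 1, mul_assoc]
end

section
/- Let r_n(q) = R(K_n)(q) denote the reliability polynomial of the complete graph K_n on n vertices. Then for every integer n ≥ 2 and every q ∈ [0, 1/8], 1 − (n+1)q^{n−1} ≤ r_n(q) ≤ 1 − (n−1)q^{n−1}. -/
/-!
Write `D(q) = 1 - r_n(q)` for the probability that the random spanning subgraph of `K_n`, which
keeps each edge independently with probability `1 - q`, is disconnected.

For the lower bound on `D`, apply Bonferroni's inequality to the events "vertex `v` is isolated":
each has probability `q^(n-1)`, each pair of them `q^(2n-3)`, and `n(n-1)/2 · q^(n-2) ≤ 1` for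
`q ≤ 1/8`.

For the upper bound, a disconnected subgraph has no edge leaving the component `A` of a fixed
vertex, an event of probability `q^(|A|(n-|A|))`. Summing over `A` gives
`∑ₖ C(n-1,k-1) q^(k(n-k))`; the sizes `k = 1` and `k = n-1` contribute `n q^(n-1)`, and for
`q ≤ 1/8` all other sizes together contribute at most `q^(n-1)`.
-/

open Finset

section BernoulliWeight

variable {α : Type*} (E : Finset α) (q : ℝ)

/-- The probability that the random subset of `E`, keeping each element independently with
probability `1 - q`, is `S` (meaningful for `S ⊆ E`). -/
noncomputable def bernoulliWeight (S : Finset α) : ℝ := (1 - q) ^ #S * q ^ (#E - #S)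

variable {q} in
lemma bernoulliWeight_nonneg (hq₀ : 0 ≤ q) (hq₁ : q ≤ 1) (S : Finset α) :
    0 ≤ bernoulliWeight E q S :=
  mul_nonneg (pow_nonneg (sub_nonneg.2 hq₁) _) (pow_nonneg hq₀ _)

lemma sum_bernoulliWeight_powerset : ∑ S ∈ E.powerset, bernoulliWeight E q S = 1 := by
  simp [bernoulliWeight, sum_pow_mul_eq_add_pow]

variable [DecidableEq α]

lemma sum_bernoulliWeight_disjoint {F : Finset α} (hF : F ⊆ E) :
    ∑ S ∈ E.powerset with Disjoint S F, bernoulliWeight E q S = q ^ #F := by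
  have hE : #E = #F + #(E \ F) := by
    rw [card_sdiff_of_subset hF, Nat.add_sub_cancel' (card_le_card hF)]
  calc ∑ S ∈ E.powerset with Disjoint S F, bernoulliWeight E q S
      = ∑ S ∈ (E \ F).powerset, q ^ #F * ((1 - q) ^ #S * q ^ (#(E \ F) - #S)) := by
        refine sum_congr (by ext S; simp [subset_sdiff, and_comm]) fun S hS ↦ ?_
        have hS := card_le_card (mem_powerset.1 hS)
        rw [bernoulliWeight, hE, Nat.add_sub_assoc hS, pow_add]
        ring
    _ = q ^ #F := by simp [← mul_sum, sum_pow_mul_eq_add_pow]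

lemma sum_card_disjoint_mul_bernoulliWeight {ι : Type*} (I : Finset ι) (F : ι → Finset α)
    (hF : ∀ i ∈ I, F i ⊆ E) :
    ∑ S ∈ E.powerset, (#{i ∈ I | Disjoint S (F i)} : ℝ) * bernoulliWeight E q S =
      ∑ i ∈ I, q ^ #(F i) := by
  calc _ = ∑ i ∈ I, ∑ S ∈ E.powerset with Disjoint S (F i), bernoulliWeight E q S := by
        simp only [card_filter, Nat.cast_sum, sum_mul, sum_filter]
        rw [sum_comm]
        simp
    _ = _ := sum_congr rfl fun i hi ↦ sum_bernoulliWeight_disjoint E q (hF i hi)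

end BernoulliWeight

-- Pointwise Bonferroni inequality; for `k = #s ≥ 1` it reads `(k - 1) * (k - 2) ≥ 0`.
lemma two_mul_card_sub_card_offDiag_le {β : Type*} [DecidableEq β] (s : Finset β) :
    2 * (#s : ℝ) - #s.offDiag ≤ if s.Nonempty then 2 else 0 := by
  rw [offDiag_card]
  rcases s.eq_empty_or_nonempty with rfl | hs
  · simp
  rw [if_pos hs, Nat.cast_sub (Nat.le_mul_self _), Nat.cast_mul]
  obtain h | h : #s = 1 ∨ 2 ≤ #s := by have := hs.card_pos; omega
  · rw [h]; norm_num
  · have h' : (2 : ℝ) ≤ #s := by exact_mod_cast h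
    nlinarith

open SimpleGraph

section Graph

variable {V : Type*} [Fintype V] [DecidableEq V]

def crossEdges (A : Finset V) : Finset (Sym2 V) := (A ×ˢ Aᶜ).image fun p ↦ s(p.1, p.2)

lemma card_crossEdges (A : Finset V) : #(crossEdges A) = #A * #Aᶜ := by
  rw [crossEdges, card_image_of_injOn, card_product]
  rintro ⟨a, b⟩ hab ⟨a', b'⟩ hab' h
  simp only [coe_product, Set.mem_prod, mem_coe, mem_compl] at hab hab'
  rcases Sym2.eq_iff.1 h with ⟨rfl, rfl⟩ | ⟨rfl, -⟩
  · rfl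
  · exact absurd hab.1 hab'.2

lemma crossEdges_subset_edgeFinset_top (A : Finset V) :
    crossEdges A ⊆ (⊤ : SimpleGraph V).edgeFinset := by
  intro e he
  obtain ⟨⟨a, b⟩, hab, rfl⟩ := mem_image.1 he
  simp only [mem_product, mem_compl] at hab
  simpa using fun h : a = b ↦ hab.2 (h ▸ hab.1)

open scoped Classical in
lemma disjoint_crossEdges_reachable (S : Finset (Sym2 V)) (v₀ : V) :
    Disjoint S (crossEdges {u | (fromEdgeSet (SetLike.coe S)).Reachable v₀ u}) := by
  refine disjoint_left.2 fun e heS he ↦ ?_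
  obtain ⟨⟨a, b⟩, hab, rfl⟩ := mem_image.1 he
  simp only [mem_product, mem_compl, mem_filter, mem_univ, true_and] at hab
  have hadj : (fromEdgeSet (SetLike.coe S)).Adj a b :=
    (fromEdgeSet_adj _).2 ⟨heS, fun h ↦ hab.2 (h ▸ hab.1)⟩
  exact hab.2 (hab.1.trans hadj.reachable)

variable (G : SimpleGraph V) [DecidableRel G.Adj]

lemma card_incidenceFinset_union_of_adj {v w : V} (h : G.Adj v w) :
    #(G.incidenceFinset v ∪ G.incidenceFinset w) = G.degree v + G.degree w - 1 := by
  have hinter : G.incidenceFinset v ∩ G.incidenceFinset w = {s(v, w)} :=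
    coe_injective (by simpa using G.incidenceSet_inter_incidenceSet_of_adj h)
  have := card_union_add_card_inter (G.incidenceFinset v) (G.incidenceFinset w)
  rw [hinter, card_singleton, card_incidenceFinset_eq_degree,
    card_incidenceFinset_eq_degree] at this
  omega

lemma not_connected_fromEdgeSet_of_disjoint_incidenceFinset [Nontrivial V]
    {S : Finset (Sym2 V)} (hS : S ⊆ G.edgeFinset) {v : V} (hv : Disjoint S (G.incidenceFinset v)) :
    ¬ (fromEdgeSet (SetLike.coe S)).Connected := fun hc ↦ by
  obtain ⟨u, hu⟩ := hc.preconnected.exists_adj_of_nontrivial v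
  obtain ⟨hvu, -⟩ := (fromEdgeSet_adj _).1 hu
  refine disjoint_left.1 hv hvu ((mem_incidenceFinset _ _ _).2 ⟨?_, Sym2.mem_mk_left v u⟩)
  exact G.mem_edgeFinset.1 (hS hvu)

-- `SetLike.coe S` rather than `(S : Set _)`: the ascription would make the bound variable a set.
open scoped Classical in
noncomputable def disconnProb (q : ℝ) : ℝ :=
  ∑ S ∈ G.edgeFinset.powerset with ¬ (fromEdgeSet (SetLike.coe S)).Connected,
    bernoulliWeight G.edgeFinset q S

open scoped Classical in
lemma rel_eq_sum_connected (q : ℝ) :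
    rel G q = ∑ S ∈ G.edgeFinset.powerset with (fromEdgeSet (SetLike.coe S)).Connected,
      bernoulliWeight G.edgeFinset q S := by
  set 𝒞 := {S ∈ G.edgeFinset.powerset | (fromEdgeSet (SetLike.coe S)).Connected}
  have hm : numEdges G = #G.edgeFinset := by
    rw [numEdges, ← coe_edgeFinset, Set.ncard_coe_finset]
  have hcoeff (i : ℕ) : relCoeff G i = #{S ∈ 𝒞 | #S = i} := by
    rw [relCoeff, ← Set.ncard_coe_finset]
    congr 1
    ext S
    simp only [← coe_edgeFinset, SetLike.coe_subset_coe, Set.mem_ofPred_eq, coe_filter,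
      mem_filter, mem_powerset, 𝒞]
    tauto
  have hmaps : ∀ S ∈ 𝒞, #S ∈ range (numEdges G + 1) := fun S hS ↦ by
    rw [mem_range, Nat.lt_succ_iff, hm]
    exact card_le_card (mem_powerset.1 (mem_filter.1 hS).1)
  rw [rel, ← sum_fiberwise_of_maps_to hmaps]
  refine sum_congr rfl fun i _ ↦ ?_
  rw [sum_congr rfl fun S hS ↦ by rw [bernoulliWeight, (mem_filter.1 hS).2, ← hm], sum_const,
    nsmul_eq_mul, hcoeff, mul_assoc]

lemma rel_add_disconnProb (q : ℝ) : rel G q + disconnProb G q = 1 := by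
  rw [rel_eq_sum_connected, disconnProb, sum_filter_add_sum_filter_not,
    sum_bernoulliWeight_powerset]

/-- Bonferroni's inequality for the events "`v` is isolated". Ordered pairs count each pair of
vertices twice, hence the factors `2`. -/
lemma two_mul_sum_pow_degree_sub_le_two_mul_disconnProb [Nontrivial V] {q : ℝ} (hq₀ : 0 ≤ q)
    (hq₁ : q ≤ 1) :
    2 * ∑ v, q ^ G.degree v
        - ∑ p ∈ (univ : Finset V).offDiag,
            q ^ #(G.incidenceFinset p.1 ∪ G.incidenceFinset p.2)
      ≤ 2 * disconnProb G q := by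
  set E := G.edgeFinset
  set isolated : Finset (Sym2 V) → Finset V := fun S ↦ {v | Disjoint S (G.incidenceFinset v)}
  have hsingle : ∑ v, q ^ G.degree v
      = ∑ S ∈ E.powerset, (#(isolated S) : ℝ) * bernoulliWeight E q S := by
    rw [sum_card_disjoint_mul_bernoulliWeight E q univ _ fun v _ ↦ G.incidenceFinset_subset v]
    simp only [card_incidenceFinset_eq_degree]
  have hpair : ∑ p ∈ (univ : Finset V).offDiag,
        q ^ #(G.incidenceFinset p.1 ∪ G.incidenceFinset p.2)
      = ∑ S ∈ E.powerset, (#(isolated S).offDiag : ℝ) * bernoulliWeight E q S := by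
    rw [← sum_card_disjoint_mul_bernoulliWeight E q (univ : Finset V).offDiag
      (fun p : V × V ↦ G.incidenceFinset p.1 ∪ G.incidenceFinset p.2)
      fun p _ ↦ union_subset (G.incidenceFinset_subset _) (G.incidenceFinset_subset _)]
    refine sum_congr rfl fun S _ ↦ ?_
    congr 3
    ext p
    simp only [isolated, mem_filter, mem_offDiag, mem_univ, true_and, disjoint_union_right]
    tauto
  rw [hsingle, hpair, mul_sum, ← sum_sub_distrib, disconnProb, sum_filter, mul_sum]
  refine sum_le_sum fun S hS ↦ ?_
  have hw := bernoulliWeight_nonneg E hq₀ hq₁ S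
  calc 2 * (#(isolated S) * bernoulliWeight E q S)
        - #(isolated S).offDiag * bernoulliWeight E q S
      = (2 * #(isolated S) - #(isolated S).offDiag) * bernoulliWeight E q S := by ring
    _ ≤ (if (isolated S).Nonempty then 2 else 0) * bernoulliWeight E q S :=
        mul_le_mul_of_nonneg_right (two_mul_card_sub_card_offDiag_le _) hw
    _ ≤ 2 * if ¬ (fromEdgeSet (SetLike.coe S)).Connected then bernoulliWeight E q S else 0 := by
        by_cases hne : (isolated S).Nonempty
        · obtain ⟨v, hv⟩ := hne
          rw [if_pos ⟨v, hv⟩, if_pos (not_connected_fromEdgeSet_of_disjoint_incidenceFinset G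
            (mem_powerset.1 hS) (mem_filter.1 hv).2)]
        · rw [if_neg hne, zero_mul]
          split_ifs <;> linarith

open scoped Classical in
/-- A disconnected edge set avoids all edges leaving the component `insert v₀ B` of `v₀`. -/
lemma disconnProb_le_sum_crossEdges (v₀ : V) {q : ℝ} (hq₀ : 0 ≤ q) (hq₁ : q ≤ 1) :
    disconnProb G q ≤ ∑ B ∈ (univ.erase v₀).powerset.erase (univ.erase v₀),
      q ^ #(G.edgeFinset ∩ crossEdges (insert v₀ B)) := by
  set E := G.edgeFinset
  set T := (univ : Finset V).erase v₀
  set reach : Finset (Sym2 V) → Finset V :=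
    fun S ↦ {u | (fromEdgeSet (SetLike.coe S)).Reachable v₀ u}
  have hv₀ (S : Finset (Sym2 V)) : v₀ ∈ reach S := by simp [reach]
  have hmaps : ∀ S ∈ {S ∈ E.powerset | ¬ (fromEdgeSet (SetLike.coe S)).Connected},
      (reach S).erase v₀ ∈ T.powerset.erase T := by
    intro S hS
    refine mem_erase.2 ⟨fun h ↦ (mem_filter.1 hS).2 ?_,
      mem_powerset.2 (erase_subset_erase _ (subset_univ _))⟩
    have huniv : reach S = univ := by
      rw [← insert_erase (hv₀ S), h, insert_erase (mem_univ v₀)]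
    refine (connected_iff_exists_forall_reachable _).2 ⟨v₀, fun u ↦ ?_⟩
    have hu : u ∈ reach S := by rw [huniv]; exact mem_univ u
    simpa [reach] using hu
  rw [disconnProb, ← sum_fiberwise_of_maps_to hmaps]
  refine sum_le_sum fun B _ ↦ ?_
  calc ∑ S ∈ {S ∈ E.powerset | ¬ (fromEdgeSet (SetLike.coe S)).Connected}
          with (reach S).erase v₀ = B, bernoulliWeight E q S
      ≤ ∑ S ∈ E.powerset with Disjoint S (E ∩ crossEdges (insert v₀ B)),
          bernoulliWeight E q S := by
        refine sum_le_sum_of_subset_of_nonneg (fun S hS ↦ ?_)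
          fun S _ _ ↦ bernoulliWeight_nonneg E hq₀ hq₁ S
        simp only [mem_filter] at hS ⊢
        refine ⟨hS.1.1, ?_⟩
        rw [← hS.2, insert_erase (hv₀ S)]
        exact (disjoint_crossEdges_reachable S v₀).mono_right inter_subset_right
    _ = _ := sum_bernoulliWeight_disjoint E q inter_subset_left

end Graph

lemma mul_self_sub_le_two_mul_eight_pow {n : ℕ} (hn : 2 ≤ n) : n * n - n ≤ 2 * 8 ^ (n - 2) := by
  induction n, hn using Nat.le_induction with
  | base => norm_num
  | succ m hm ih =>
    rw [show m + 1 - 2 = m - 2 + 1 by omega, pow_succ]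
    zify [Nat.le_mul_self m, Nat.le_mul_self (m + 1)] at *
    nlinarith

lemma mul_self_sub_mul_pow_le {n : ℕ} (hn : 2 ≤ n) {q : ℝ} (hq₀ : 0 ≤ q) (hq : q ≤ 1 / 8) :
    ((n * n - n : ℕ) : ℝ) * q ^ (2 * n - 3) ≤ 2 * q ^ (n - 1) := by
  have h : ((n * n - n : ℕ) : ℝ) * q ^ (n - 2) ≤ 2 :=
    calc ((n * n - n : ℕ) : ℝ) * q ^ (n - 2)
        ≤ ((2 * 8 ^ (n - 2) : ℕ) : ℝ) * (1 / 8) ^ (n - 2) := by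
          gcongr
          exact mul_self_sub_le_two_mul_eight_pow hn
      _ = 2 := by push_cast; rw [mul_assoc, ← mul_pow]; norm_num
  rw [show 2 * n - 3 = (n - 1) + (n - 2) by omega, pow_add]
  nlinarith [pow_nonneg hq₀ (n - 1)]

lemma sub_one_mul_pow_le_disconnProb_top {n : ℕ} (hn : 2 ≤ n) {q : ℝ} (hq₀ : 0 ≤ q)
    (hq : q ≤ 1 / 8) : ((n : ℝ) - 1) * q ^ (n - 1) ≤ disconnProb (⊤ : SimpleGraph (Fin n)) q := by
  have : Nontrivial (Fin n) := Fin.nontrivial_iff_two_le.2 hn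
  have hbonf := two_mul_sum_pow_degree_sub_le_two_mul_disconnProb (⊤ : SimpleGraph (Fin n))
    hq₀ (by linarith)
  have hpair : ∀ p ∈ (univ : Finset (Fin n)).offDiag,
      q ^ #((⊤ : SimpleGraph (Fin n)).incidenceFinset p.1 ∪
        (⊤ : SimpleGraph (Fin n)).incidenceFinset p.2) = q ^ (2 * n - 3) := fun p hp ↦ by
    rw [card_incidenceFinset_union_of_adj _ ((top_adj _ _).2 (mem_offDiag.1 hp).2.2)]
    simp only [complete_graph_degree, Fintype.card_fin]
    congr 1
    omega
  rw [sum_congr rfl hpair] at hbonf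
  simp only [complete_graph_degree, Fintype.card_fin, sum_const, card_univ, offDiag_card,
    nsmul_eq_mul] at hbonf
  have := mul_self_sub_mul_pow_le hn hq₀ hq
  nlinarith

lemma sum_powerset_erase_self_apply_card {α β : Type*} [AddCommGroup α] [DecidableEq β]
    (f : ℕ → α) (T : Finset β) :
    ∑ B ∈ T.powerset.erase T, f #B = ∑ j ∈ range #T, (#T).choose j • f j := by
  rw [sum_erase_eq_sub (mem_powerset_self T), sum_powerset_apply_card, sum_range_succ,
    Nat.choose_self, one_smul, add_sub_cancel_right]

lemma sum_range_choose_succ_mul_pow_le (k : ℕ) {q : ℝ} (hq₀ : 0 ≤ q) (hq : q ≤ 1 / 8) :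
    ∑ i ∈ range k, ((k + 2).choose (i + 1) : ℝ) * q ^ ((i + 2) * (k + 1 - i)) ≤ q ^ (k + 2) := by
  rcases Nat.eq_zero_or_pos k with rfl | hk
  · simp only [range_zero, sum_empty]
    positivity
  have hterm : ∀ i ∈ range k, q ^ ((i + 2) * (k + 1 - i)) ≤ q ^ (k + 2) * (1 / 8) ^ k := by
    intro i hi
    obtain ⟨d, rfl⟩ : ∃ d, k = i + 1 + d := ⟨k - i - 1, by have := mem_range.1 hi; omega⟩
    have hexp : (i + 1 + d + 2) + (i + 1 + d) ≤ (i + 2) * (i + 1 + d + 1 - i) := by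
      rw [show i + 1 + d + 1 - i = d + 2 by omega]
      nlinarith
    calc q ^ ((i + 2) * (i + 1 + d + 1 - i))
        ≤ q ^ ((i + 1 + d + 2) + (i + 1 + d)) := pow_le_pow_of_le_one hq₀ (by linarith) hexp
      _ ≤ q ^ (i + 1 + d + 2) * (1 / 8) ^ (i + 1 + d) := by
        rw [pow_add]
        gcongr
  have hchoose : ∑ i ∈ range k, ((k + 2).choose (i + 1) : ℝ) ≤ 2 ^ (k + 2) := by
    have h : ∑ i ∈ range k, (k + 2).choose (i + 1) ≤ 2 ^ (k + 2) :=
      calc ∑ i ∈ range k, (k + 2).choose (i + 1)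
          ≤ ∑ i ∈ range (k + 2), (k + 2).choose (i + 1) :=
            sum_le_sum_of_subset (range_mono (by omega))
        _ ≤ ∑ i ∈ range (k + 2 + 1), (k + 2).choose i := by
            rw [sum_range_succ' _ (k + 2)]
            exact Nat.le_add_right _ _
        _ = 2 ^ (k + 2) := Nat.sum_range_choose _
    exact_mod_cast h
  have hsmall : (2 : ℝ) ^ (k + 2) * (1 / 8) ^ k ≤ 1 :=
    calc (2 : ℝ) ^ (k + 2) * (1 / 8) ^ k = 4 * (1 / 4) ^ k := by
          rw [pow_add, mul_right_comm, ← mul_pow]; norm_num [mul_comm]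
      _ ≤ 4 * (1 / 4) ^ 1 :=
          mul_le_mul_of_nonneg_left (pow_le_pow_of_le_one (by norm_num) (by norm_num) hk)
            (by norm_num)
      _ = 1 := by norm_num
  calc ∑ i ∈ range k, ((k + 2).choose (i + 1) : ℝ) * q ^ ((i + 2) * (k + 1 - i))
      ≤ ∑ i ∈ range k, ((k + 2).choose (i + 1) : ℝ) * (q ^ (k + 2) * (1 / 8) ^ k) :=
        sum_le_sum fun i hi ↦ mul_le_mul_of_nonneg_left (hterm i hi) (by positivity)
    _ = (∑ i ∈ range k, ((k + 2).choose (i + 1) : ℝ)) * (1 / 8) ^ k * q ^ (k + 2) := by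
        rw [← sum_mul]; ring
    _ ≤ 2 ^ (k + 2) * (1 / 8) ^ k * q ^ (k + 2) := by gcongr
    _ ≤ q ^ (k + 2) := by nlinarith [pow_nonneg hq₀ (k + 2)]

/-- The terms `j = 0` and `j = m - 1` give `q ^ m + m * q ^ m`; the others are bounded by
`sum_range_choose_succ_mul_pow_le`. -/
lemma sum_range_choose_mul_pow_le {m : ℕ} (hm : 1 ≤ m) {q : ℝ} (hq₀ : 0 ≤ q) (hq : q ≤ 1 / 8) :
    ∑ j ∈ range m, (m.choose j : ℝ) * q ^ ((j + 1) * (m - j)) ≤ (m + 2) * q ^ m := by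
  rcases m with _ | _ | k
  · omega
  · norm_num
    linarith
  · have hmid := sum_range_choose_succ_mul_pow_le k hq₀ hq
    rw [sum_range_succ, sum_range_succ', Nat.add_sub_cancel_left, Nat.sub_zero, zero_add,
      mul_one, one_mul, Nat.choose_succ_self_right, Nat.choose_zero_right]
    push_cast
    linarith

lemma disconnProb_top_le_add_one_mul_pow {n : ℕ} (hn : 2 ≤ n) {q : ℝ} (hq₀ : 0 ≤ q) (hq : q ≤ 1 / 8) :
    disconnProb (⊤ : SimpleGraph (Fin n)) q ≤ ((n : ℝ) + 1) * q ^ (n - 1) := by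
  obtain ⟨m, rfl⟩ : ∃ m, n = m + 1 := ⟨n - 1, by omega⟩
  set T := (univ : Finset (Fin (m + 1))).erase 0
  have hcut : ∀ B ∈ T.powerset.erase T,
      q ^ #((⊤ : SimpleGraph (Fin (m + 1))).edgeFinset ∩ crossEdges (insert 0 B))
        = q ^ ((#B + 1) * (m - #B)) := by
    intro B hB
    have h0 : (0 : Fin (m + 1)) ∉ B := fun h ↦ by
      simpa [T] using mem_powerset.1 (mem_of_mem_erase hB) h
    rw [inter_eq_right.2 (crossEdges_subset_edgeFinset_top _), card_crossEdges, card_compl,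
      card_insert_of_notMem h0, Fintype.card_fin]
    congr 2
    omega
  calc disconnProb (⊤ : SimpleGraph (Fin (m + 1))) q
      ≤ ∑ B ∈ T.powerset.erase T,
          q ^ #((⊤ : SimpleGraph (Fin (m + 1))).edgeFinset ∩ crossEdges (insert 0 B)) :=
        disconnProb_le_sum_crossEdges ⊤ 0 hq₀ (by linarith)
    _ = ∑ B ∈ T.powerset.erase T, q ^ ((#B + 1) * (m - #B)) := sum_congr rfl hcut
    _ = ∑ j ∈ range m, (m.choose j : ℝ) * q ^ ((j + 1) * (m - j)) := by
        rw [sum_powerset_erase_self_apply_card (fun j ↦ q ^ ((j + 1) * (m - j)))]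
        simp [T, nsmul_eq_mul]
    _ ≤ (m + 2) * q ^ m := sum_range_choose_mul_pow_le (by omega) hq₀ hq
    _ = ((m + 1 : ℕ) + 1) * q ^ (m + 1 - 1) := by push_cast; ring_nf

/-- For every `n ≥ 2` and every `q ∈ [0, 1/8]`,
`1 - (n+1)q^(n-1) ≤ r_n(q) ≤ 1 - (n-1)q^(n-1)`. -/
theorem relK_bounds (n : ℕ) (hn : 2 ≤ n) :
    ∀ q ∈ Set.Icc (0 : ℝ) (1 / 8),
      1 - ((n : ℝ) + 1) * q ^ (n - 1) ≤ relK n q ∧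
      relK n q ≤ 1 - ((n : ℝ) - 1) * q ^ (n - 1) := by
  rintro q ⟨hq₀, hq⟩
  have hsum := rel_add_disconnProb (⊤ : SimpleGraph (Fin n)) q
  have hlower := sub_one_mul_pow_le_disconnProb_top hn hq₀ hq
  have hupper := disconnProb_top_le_add_one_mul_pow hn hq₀ hq
  rw [relK]
  constructor <;> linarith
end

section
/- Let m ≥ 1 be an integer, let 0 < a < b < 1 with b − a ≤ 2^{−m}, and let s : ℝ → ℝ be twice differentiable on [0,1] with 0 ≤ s(q) ≤ 1 and s'(q) ≤ 0 for all q ∈ [0,1]. Suppose s(a) ≥ 3/4, s(b) ≤ 1/4, and |s'(b)| ≤ 2^{−m−1}. Then there exists a point q ∈ (a,b) such that s'(q) ≤ −2^{m−2} and s''(q) ≥ 2^{2m−2}. -/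
/-!
By the mean value theorem `s'` drops to `-2^(m-1)` at some `c ∈ (a, b)`, whereas `|s'(b)|` is
tiny, so `s'` climbs back through the level `-2^(m-2)`. Up to the first time `d` at which it
does, `s' < -2^(m-2)`, and the mean value theorem for `s'` on `[c, d]` yields a point where
`s''` is at least the rise `2^(m-2)` over the length `d - c ≤ 2^(-m)`.
-/

open Set

theorem exists_lt_and_slope_le_deriv {f : ℝ → ℝ} {c b K : ℝ}
    (hcb : c ≤ b) (hf : DifferentiableOn ℝ f (Icc c b)) (hc : f c < K) (hb : K ≤ f b) :
    ∃ q ∈ Ioo c b, f q < K ∧ (K - f c) / (b - c) ≤ deriv f q := by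
  obtain ⟨d, ⟨⟨hcd, hdb⟩, hKd⟩, hd_least⟩ : ∃ d, IsLeast (Icc c b ∩ f ⁻¹' Ici K) d :=
    (isCompact_Icc.of_isClosed_subset
      (hf.continuousOn.preimage_isClosed_of_isClosed isClosed_Icc isClosed_Ici)
      inter_subset_left).exists_isLeast ⟨b, right_mem_Icc.2 hcb, hb⟩
  have hcd : c < d := hcd.lt_of_ne fun h => (h ▸ hc).not_ge hKd
  obtain ⟨q, ⟨hcq, hqd⟩, hq_slope⟩ := exists_deriv_eq_slope f hcd
    (hf.continuousOn.mono (Icc_subset_Icc_right hdb))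
    (hf.mono (Ioo_subset_Icc_self.trans (Icc_subset_Icc_right hdb)))
  refine ⟨q, ⟨hcq, hqd.trans_le hdb⟩, ?_, ?_⟩
  · exact not_le.1 fun hKq => hqd.not_ge (hd_least ⟨⟨hcq.le, hqd.le.trans hdb⟩, hKq⟩)
  · calc (K - f c) / (b - c) ≤ (K - f c) / (d - c) :=
          div_le_div_of_nonneg_left (sub_nonneg.2 hc.le) (sub_pos.2 hcd) (by linarith)
      _ ≤ (f d - f c) / (d - c) :=
          div_le_div_of_nonneg_right (sub_le_sub_right hKd _) (sub_pos.2 hcd).le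
      _ = deriv f q := hq_slope.symm

theorem exists_deriv_le_and_le_deriv_deriv {s : ℝ → ℝ} {a b L : ℝ} (hL : 2 ≤ L) (hab : a < b)
    (hlen : b - a ≤ L⁻¹) (hs : DifferentiableOn ℝ s (Icc a b))
    (hs' : DifferentiableOn ℝ (deriv s) (Icc a b)) (hdrop : 1 / 2 ≤ s a - s b)
    (hsb' : -(L⁻¹ / 2) ≤ deriv s b) :
    ∃ q ∈ Ioo a b, deriv s q ≤ -(L / 4) ∧ L ^ 2 / 4 ≤ deriv (deriv s) q := by
  obtain ⟨c, hc, hc_slope⟩ :=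
    exists_deriv_eq_slope s hab hs.continuousOn (hs.mono Ioo_subset_Icc_self)
  have hLlen : L * (b - a) ≤ 1 := by
    rwa [← le_div_iff₀' (by positivity), one_div]
  have hc_le : deriv s c ≤ -(L / 2) := by
    rw [hc_slope, div_le_iff₀ (sub_pos.2 hab)]
    nlinarith
  have hLinv : L⁻¹ ≤ 1 / 2 := by
    rw [one_div]; exact inv_anti₀ two_pos hL
  obtain ⟨q, hq, hq_lt, hq_slope⟩ := exists_lt_and_slope_le_deriv (K := -(L / 4)) hc.2.le
    (hs'.mono (Icc_subset_Icc hc.1.le le_rfl)) (by linarith) (by linarith)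
  refine ⟨q, ⟨hc.1.trans hq.1, hq.2⟩, hq_lt.le, le_trans ?_ hq_slope⟩
  rw [le_div_iff₀ (sub_pos.2 (hq.1.trans hq.2))]
  nlinarith [hc.1, hq.2]

theorem exists_point_large_derivs_general (m : ℕ) (hm : 1 ≤ m) (a b : ℝ)
    (ha : 0 < a) (hab : a < b) (hb : b < 1)
    (hlen : b - a ≤ (2 : ℝ) ^ (-(m : ℤ)))
    (s : ℝ → ℝ)
    (hdiff : ∀ q ∈ Set.Icc (0 : ℝ) 1,
      DifferentiableAt ℝ s q ∧ DifferentiableAt ℝ (deriv s) q)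
    (hsa : 3 / 4 ≤ s a) (hsb : s b ≤ 1 / 4)
    (hsb' : |deriv s b| ≤ (2 : ℝ) ^ (-(m : ℤ) - 1)) :
    ∃ q ∈ Set.Ioo a b,
      deriv s q ≤ -(2 : ℝ) ^ ((m : ℤ) - 2) ∧
      (2 : ℝ) ^ (2 * (m : ℤ) - 2) ≤ deriv (deriv s) q := by
  have hsub : Icc a b ⊆ Icc 0 1 := Icc_subset_Icc ha.le hb.le
  have hL : (2 : ℝ) ≤ 2 ^ (m : ℤ) := by
    rw [zpow_natCast]; exact le_self_pow₀ one_le_two (by omega)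
  rw [zpow_neg] at hlen
  rw [zpow_sub₀ two_ne_zero, zpow_neg, zpow_one] at hsb'
  have h_quarter : (2 : ℝ) ^ ((m : ℤ) - 2) = 2 ^ (m : ℤ) / 4 := by
    rw [zpow_sub₀ two_ne_zero]; norm_num
  have h_sq_quarter : (2 : ℝ) ^ (2 * (m : ℤ) - 2) = (2 ^ (m : ℤ)) ^ 2 / 4 := by
    rw [zpow_sub₀ two_ne_zero, mul_comm, zpow_mul]; norm_num
  obtain ⟨q, hq, hq', hq''⟩ := exists_deriv_le_and_le_deriv_deriv hL hab hlen
    (fun x hx => (hdiff x (hsub hx)).1.differentiableWithinAt)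
    (fun x hx => (hdiff x (hsub hx)).2.differentiableWithinAt)
    (by linarith) (neg_le_of_abs_le hsb')
  exact ⟨q, hq, h_quarter ▸ hq', h_sq_quarter ▸ hq''⟩

/-- Let `m ≥ 1`, `0 < a < b < 1` with `b - a ≤ 2^(-m)`, and let `s` be twice
differentiable on `[0,1]`, with values in `[0,1]` and nonincreasing there. If
`s(a) ≥ 3/4`, `s(b) ≤ 1/4` and `|s'(b)| ≤ 2^(-m-1)`, then there is a point
`q ∈ (a,b)` with `s'(q) ≤ -2^(m-2)` and `s''(q) ≥ 2^(2m-2)`. -/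
theorem exists_point_large_derivs (m : ℕ) (hm : 1 ≤ m) (a b : ℝ)
    (ha : 0 < a) (hab : a < b) (hb : b < 1)
    (hlen : b - a ≤ (2 : ℝ) ^ (-(m : ℤ)))
    (s : ℝ → ℝ)
    (hdiff : ∀ q ∈ Set.Icc (0 : ℝ) 1,
      DifferentiableAt ℝ s q ∧ DifferentiableAt ℝ (deriv s) q)
    (hs01 : ∀ q ∈ Set.Icc (0 : ℝ) 1, s q ∈ Set.Icc (0 : ℝ) 1)
    (hs' : ∀ q ∈ Set.Icc (0 : ℝ) 1, deriv s q ≤ 0)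
    (hsa : 3 / 4 ≤ s a) (hsb : s b ≤ 1 / 4)
    (hsb' : |deriv s b| ≤ (2 : ℝ) ^ (-(m : ℤ) - 1)) :
    ∃ q ∈ Set.Ioo a b,
      deriv s q ≤ -(2 : ℝ) ^ ((m : ℤ) - 2) ∧
      (2 : ℝ) ^ (2 * (m : ℤ) - 2) ≤ deriv (deriv s) q :=
  exists_point_large_derivs_general m hm a b ha hab hb hlen s hdiff hsa hsb hsb'
end
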